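/- arXiv:1812.01218 — 2 statements merged into one kernel-verified Lean document; each statement's English description precedes it below -/
import Mathlib

section
/- Let n ≥ 2, let M be an n-connected binary matroid with |E(M)| ≥ 2n-2, and let T ⊆ E(M) with |T| = n-1. Suppose that for every cocircuit Q of M intersecting T we have |Q| ≥ 2|Q ∩ T|. Then for every subset A ⊆ E(M) with |A| = n-2, there exists a circuit C of M contained in E(M) \ A with |C ∩ T| odd. -/
open Set

variable {α : Type*}

/-- The rank of a set `X` in a matroid `M`: the maximum size of an independent subset of `X`. -/
noncomputable def mrank (M : Matroid α) (X : Set α) : ℕ :=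
  sSup {n | ∃ I, M.Indep I ∧ I ⊆ X ∧ I.ncard = n}

/-- `(A, B)` is a `k`-separation of `M`: a partition of the ground set with both sides of
size at least `k` and `r(A) + r(B) - r(M) ≤ k - 1` (written additively). -/
def IsKSeparation (M : Matroid α) (k : ℕ) (A B : Set α) : Prop :=
  A ∪ B = M.E ∧ Disjoint A B ∧ k ≤ A.ncard ∧ k ≤ B.ncard ∧
    mrank M A + mrank M B + 1 ≤ mrank M M.E + k

/-- `M` is `n`-connected if it has no `k`-separation for any `k < n`. -/
def NConnected (M : Matroid α) (n : ℕ) : Prop :=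
  ∀ k A B, 1 ≤ k → k < n → ¬ IsKSeparation M k A B

/-- A circuit is a minimal dependent set. -/
def MCircuit (M : Matroid α) (C : Set α) : Prop := Minimal M.Dep C

/-- A cocircuit is a circuit of the dual matroid. -/
def MCocircuit (M : Matroid α) (C : Set α) : Prop := MCircuit M✶ C

/-- A loop is a dependent singleton. -/
def MLoop (M : Matroid α) (e : α) : Prop := M.Dep {e}

/-- A coloop is a loop of the dual, i.e. an element lying in every base. -/
def MColoop (M : Matroid α) (e : α) : Prop := M✶.Dep {e}

/-- `M` is the vector matroid of the family of vectors `φ` over `GF(2)`: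
a set is independent iff it lies in the ground set and the corresponding
vectors are linearly independent. -/
def IsRep {W : Type*} [AddCommGroup W] [Module (ZMod 2) W] (M : Matroid α) (φ : α → W) : Prop :=
  ∀ I : Set α, M.Indep I ↔ I ⊆ M.E ∧ LinearIndependent (ZMod 2) (I.restrict φ)

open scoped Classical in
/-- The columns of the element splitting matrix `A'_T`: each original column gets an extra
coordinate (the new row), equal to `1` exactly on the columns labelled by `T`, and a new
column `a` which is `1` in the new row and `0` elsewhere. -/
noncomputable def splitRep {W : Type*} [AddCommGroup W] [Module (ZMod 2) W]
    (φ : α → W) (T : Set α) (a : α) : α → W × ZMod 2 :=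
  fun x => if x = a then (0, 1) else (φ x, if x ∈ T then 1 else 0)

/-- `N` is the element splitting matroid `M'_T` of the binary matroid `M` (represented by `φ`)
with respect to `T`, with new element `a`. -/
def IsEleSplit {W : Type*} [AddCommGroup W] [Module (ZMod 2) W]
    (M : Matroid α) (φ : α → W) (T : Set α) (a : α) (N : Matroid α) : Prop :=
  a ∉ M.E ∧ N.E = insert a M.E ∧ IsRep N (splitRep φ T a)

/-- `M` is the contraction `N / a` of the single element `a` from `N`. -/
def ContractElemEq (N : Matroid α) (a : α) (M : Matroid α) : Prop :=
  M.E = N.E \ {a} ∧ ∀ I : Set α,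
    M.Indep I ↔ a ∉ I ∧
      ((N.Indep {a} ∧ N.Indep (insert a I)) ∨ (¬ N.Indep {a} ∧ N.Indep I))

/-!
Suppose every circuit of `M` avoiding `A` meets `T` in an even number of elements. Over `GF(2)`
every zero-sum set of columns is a disjoint union of circuits, so the indicator of `T` is
orthogonal to all cycles of `M \ A` and is therefore the restriction to `E \ A` of a linear
functional `g`. Its cocycle `D = {e | g (φ e) = 1}` satisfies `T \ A ⊆ D ⊆ T ∪ A`. A cocycle is a
disjoint union of cocircuits; by `n`-connectivity each has at least `n > |A|` elements, so each
meets `T` and the hypothesis gives `2|D ∩ T| ≤ |D|`. This contradicts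
`|D \ T| ≤ |A \ T| < |T \ A| ≤ |D ∩ T|`, which holds because `|A| < |T|`.
-/

open Submodule

section ZModTwo

variable {ι W : Type*} [AddCommGroup W] [Module (ZMod 2) W]

lemma ZMod.eq_one_of_ne_zero_two {z : ZMod 2} (hz : z ≠ 0) : z = 1 := by
  revert z; decide

lemma Finsupp.linearCombination_zmod_two (v : ι → W) (l : ι →₀ ZMod 2) :
    Finsupp.linearCombination (ZMod 2) v l = ∑ i ∈ l.support, v i := by
  rw [Finsupp.linearCombination_apply, Finsupp.sum]
  refine Finset.sum_congr rfl fun i hi => ?_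
  rw [ZMod.eq_one_of_ne_zero_two (Finsupp.mem_support_iff.1 hi), one_smul]

end ZModTwo

namespace ZModModule

variable {ι W : Type*} [AddCommGroup W] [Module (ZMod 2) W]

lemma mem_span_image_iff_exists_finset_sum {v : ι → W} {s : Set ι} {x : W} :
    x ∈ span (ZMod 2) (v '' s) ↔ ∃ t : Finset ι, ↑t ⊆ s ∧ ∑ i ∈ t, v i = x := by
  constructor
  · rw [Finsupp.mem_span_image_iff_linearCombination]
    rintro ⟨l, hl, rfl⟩
    exact ⟨l.support, hl, (Finsupp.linearCombination_zmod_two v l).symm⟩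
  · rintro ⟨t, hts, rfl⟩
    exact Submodule.sum_mem _ fun i hi => subset_span (mem_image_of_mem v (hts hi))

lemma exists_dual_eq_one_of_notMem {p : Submodule (ZMod 2) W} {x : W} (hx : x ∉ p) :
    ∃ f : Module.Dual (ZMod 2) W, f x = 1 ∧ ∀ y ∈ p, f y = 0 := by
  obtain ⟨f, hfx, hfp⟩ := p.exists_dual_map_eq_bot_of_notMem hx inferInstance
  refine ⟨f, ZMod.eq_one_of_ne_zero_two hfx, fun y hy => ?_⟩
  simpa [hfp] using mem_map_of_mem (f := f) hy

lemma exists_dual_eq_indicator_of_even {v : ι → W} {S T : Set ι}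
    (h : ∀ t : Finset ι, ↑t ⊆ S → ∑ i ∈ t, v i = 0 → Even ((↑t ∩ T).ncard)) :
    ∃ g : Module.Dual (ZMod 2) W, ∀ i ∈ S, g (v i) = T.indicator 1 i := by
  classical
  set χ : ι → ZMod 2 := T.indicator 1
  have hχ : ∀ t : Finset ι, ∑ i ∈ t, χ i = ((↑t ∩ T).ncard : ZMod 2) := by
    intro t
    simp only [χ, indicator_apply, Pi.one_apply]
    rw [Finset.sum_boole, ← ncard_coe_finset, Finset.coe_filter]
    rfl
  have hnot : ((0 : W), (1 : ZMod 2)) ∉ span (ZMod 2) ((fun i => (v i, χ i)) '' S) := by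
    rw [mem_span_image_iff_exists_finset_sum]
    rintro ⟨t, htS, ht⟩
    rw [Prod.ext_iff, Prod.fst_sum, Prod.snd_sum, hχ] at ht
    rw [CharTwo.natCast_eq_ite, if_pos (h t htS ht.1)] at ht
    exact zero_ne_one ht.2
  obtain ⟨F, hF1, hF0⟩ := exists_dual_eq_one_of_notMem hnot
  refine ⟨F ∘ₗ LinearMap.inl _ _ _, fun i hi => ?_⟩
  have hFi := hF0 _ (subset_span (mem_image_of_mem _ hi))
  rw [show (v i, χ i) = LinearMap.inl (ZMod 2) W (ZMod 2) (v i) + χ i • ((0 : W), (1 : ZMod 2))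
    by simp, map_add, map_smul, hF1, smul_eq_mul, mul_one, CharTwo.add_eq_zero] at hFi
  exact hFi

end ZModModule

namespace IsRep

variable {W : Type*} [AddCommGroup W] [Module (ZMod 2) W] {M : Matroid α} {φ : α → W}
  {C I X : Set α} {e : α}

lemma indep_iff (hM : IsRep M φ) : M.Indep I ↔ I ⊆ M.E ∧ LinearIndepOn (ZMod 2) φ I :=
  hM I

lemma dep_of_sum_eq_zero (hM : IsRep M φ) {s : Finset α} (hs : s.Nonempty) (hsE : ↑s ⊆ M.E)
    (hsum : ∑ i ∈ s, φ i = 0) : M.Dep s := by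
  refine ⟨fun hind => ?_, hsE⟩
  obtain ⟨i, hi⟩ := hs
  exact one_ne_zero <|
    linearIndepOn_finset_iff.1 (hM.indep_iff.1 hind).2 1 (by simpa using hsum) i hi

lemma exists_finset_sum_eq_zero_of_isCircuit (hM : IsRep M φ) (hC : M.IsCircuit C) :
    ∃ s : Finset α, ↑s = C ∧ ∑ i ∈ s, φ i = 0 := by
  have hdep : ¬ LinearIndepOn (ZMod 2) φ C :=
    fun h => hC.not_indep (hM.indep_iff.2 ⟨hC.subset_ground, h⟩)
  obtain ⟨l, hlC, hl0, hne⟩ := linearDepOn_iff'.1 hdep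
  rw [Finsupp.linearCombination_zmod_two] at hl0
  refine ⟨l.support, hC.eq_of_dep_subset ?_ hlC, hl0⟩
  exact hM.dep_of_sum_eq_zero (Finsupp.support_nonempty_iff.2 hne) (hlC.trans hC.subset_ground) hl0

lemma even_ncard_inter_of_sum_eq_zero (hM : IsRep M φ) {S T : Set α} (hSE : S ⊆ M.E)
    (hC : ∀ C, M.IsCircuit C → C ⊆ S → Even (C ∩ T).ncard) {s : Finset α} (hsS : ↑s ⊆ S)
    (hsum : ∑ i ∈ s, φ i = 0) : Even ((↑s ∩ T).ncard) := by
  classical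
  induction s using Finset.strongInduction with
  | H s ih =>
  obtain rfl | hs := s.eq_empty_or_nonempty
  · simp
  obtain ⟨C, hCs, hCcirc⟩ := (hM.dep_of_sum_eq_zero hs (hsS.trans hSE) hsum).exists_isCircuit_subset
  obtain ⟨c, rfl, hc⟩ := hM.exists_finset_sum_eq_zero_of_isCircuit hCcirc
  have hcs : c ⊆ s := Finset.coe_subset.1 hCs
  have hcne : c.Nonempty := Finset.coe_nonempty.1 hCcirc.nonempty
  have hrest : Even ((↑(s \ c) ∩ T).ncard) :=
    ih _ (Finset.sdiff_ssubset hcs hcne) ((Finset.coe_subset.2 Finset.sdiff_subset).trans hsS)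
      (by rw [Finset.sum_sdiff_eq_sub hcs, hsum, hc, sub_zero])
  rw [Finset.coe_sdiff] at hrest
  rw [← sdiff_union_of_subset hCs, union_inter_distrib_right,
    ncard_union_eq (disjoint_sdiff_left.mono inter_subset_left inter_subset_left)]
  exact hrest.add (hC _ hCcirc (hCs.trans hsS))

lemma mem_closure_iff_of_indep (hM : IsRep M φ) (hI : M.Indep I) :
    e ∈ M.closure I ↔ e ∈ M.E ∧ φ e ∈ span (ZMod 2) (φ '' I) := by
  by_cases heI : e ∈ I
  · exact ⟨fun _ => ⟨hI.subset_ground heI, subset_span (mem_image_of_mem φ heI)⟩,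
      fun _ => M.subset_closure I hI.subset_ground heI⟩
  rw [hI.mem_closure_iff_of_notMem heI, Matroid.dep_iff, hM.indep_iff, insert_subset_iff,
    linearIndepOn_insert heI]
  have hIli := (hM.indep_iff.1 hI).2
  have hIE := hI.subset_ground
  tauto

lemma mem_closure_iff (hM : IsRep M φ) (hX : X ⊆ M.E) :
    e ∈ M.closure X ↔ e ∈ M.E ∧ φ e ∈ span (ZMod 2) (φ '' X) := by
  obtain ⟨I, hI⟩ := M.exists_isBasis X
  have hspan : span (ZMod 2) (φ '' I) = span (ZMod 2) (φ '' X) :=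
    (span_mono (image_mono hI.subset)).antisymm <| span_le.2 <| image_subset_iff.2
      fun x hx => ((hM.mem_closure_iff_of_indep hI.indep).1 (hI.subset_closure hx)).2
  rw [← hI.closure_eq_closure, hM.mem_closure_iff_of_indep hI.indep, hspan]

lemma spanning_iff (hM : IsRep M φ) (hX : X ⊆ M.E) :
    M.Spanning X ↔ ∀ e ∈ M.E, φ e ∈ span (ZMod 2) (φ '' X) := by
  rw [Matroid.spanning_iff_ground_subset_closure hX]
  exact ⟨fun h e he => ((hM.mem_closure_iff hX).1 (h he)).2,
    fun h e he => (hM.mem_closure_iff hX).2 ⟨he, h e he⟩⟩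

end IsRep

section Cocycle

variable {W : Type*} [AddCommGroup W] [Module (ZMod 2) W] {M : Matroid α} {φ : α → W}
  {Q : Set α}

def cocycle (M : Matroid α) (φ : α → W) (g : Module.Dual (ZMod 2) W) : Set α :=
  {e ∈ M.E | g (φ e) = 1}

lemma cocycle_subset_ground (g : Module.Dual (ZMod 2) W) : cocycle M φ g ⊆ M.E :=
  sep_subset _ _

lemma cocycle_add_of_subset {g g' : Module.Dual (ZMod 2) W}
    (h : cocycle M φ g' ⊆ cocycle M φ g) :
    cocycle M φ (g + g') = cocycle M φ g \ cocycle M φ g' := by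
  ext e
  by_cases he : e ∈ M.E
  · have hg' := fun h' => (h ⟨he, h'⟩).2
    simp only [cocycle, mem_sep_iff, mem_sdiff, LinearMap.add_apply, he, true_and]
    generalize g (φ e) = a at hg' ⊢
    generalize g' (φ e) = b at hg' ⊢
    revert a b; decide
  · simp [cocycle, he]

lemma IsRep.exists_cocycle_eq_of_isCocircuit (hM : IsRep M φ) (hQ : M.IsCocircuit Q) :
    ∃ g, cocycle M φ g = Q := by
  have hQE := hQ.subset_ground
  obtain ⟨e₀, he₀⟩ := hQ.nonempty
  rw [Matroid.isCocircuit_iff_minimal_compl_nonspanning] at hQ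
  set H := M.E \ Q
  have hHE : H ⊆ M.E := sdiff_subset
  have hspan : ∀ e ∈ Q, M.Spanning (insert e H) := by
    intro e he
    have h := not_not.1 <| hQ.not_prop_of_ssubset (sdiff_singleton_ssubset.2 he)
    rwa [sdiff_sdiff_right, inter_singleton_of_mem (hQE he), union_singleton] at h
  have hnot : ∀ e ∈ Q, φ e ∉ span (ZMod 2) (φ '' H) := by
    refine fun e he hmem => hQ.prop ((hM.spanning_iff hHE).2 fun x hx => ?_)
    have hx' := (hM.spanning_iff (insert_subset (hQE he) hHE)).1 (hspan e he) x hx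
    rwa [image_insert_eq, span_insert_eq_span hmem] at hx'
  obtain ⟨g, hg1, hg0⟩ := ZModModule.exists_dual_eq_one_of_notMem (hnot e₀ he₀)
  refine ⟨g, Subset.antisymm (fun e ⟨heE, hge⟩ => ?_) fun e he => ⟨hQE he, ?_⟩⟩
  · by_contra heQ
    rw [hg0 _ (subset_span (mem_image_of_mem φ ⟨heE, heQ⟩))] at hge
    exact zero_ne_one hge
  · have hmem := (hM.spanning_iff (insert_subset (hQE he₀) hHE)).1 (hspan e₀ he₀) e (hQE he)
    rw [image_insert_eq] at hmem
    obtain ⟨c, z, hz, hez⟩ := mem_span_insert.1 hmem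
    have hc : c ≠ 0 := by
      rintro rfl
      exact hnot e he (by rwa [hez, zero_smul, zero_add])
    rw [hez, map_add, map_smul, hg1, hg0 z hz, smul_eq_mul, mul_one, add_zero]
    exact ZMod.eq_one_of_ne_zero_two hc

lemma IsRep.exists_isCocircuit_subset_cocycle (hM : IsRep M φ) {g : Module.Dual (ZMod 2) W}
    (hne : (cocycle M φ g).Nonempty) : ∃ Q ⊆ cocycle M φ g, M.IsCocircuit Q := by
  obtain ⟨e, heE, hge⟩ := hne
  have hker : span (ZMod 2) (φ '' (M.E \ cocycle M φ g)) ≤ LinearMap.ker g :=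
    span_le.2 <| image_subset_iff.2 fun x ⟨hxE, hxD⟩ =>
      not_not.1 fun hx => hxD ⟨hxE, ZMod.eq_one_of_ne_zero_two hx⟩
  have hcodep : M✶.Dep (cocycle M φ g) := by
    refine ⟨fun hind => ?_, cocycle_subset_ground g⟩
    rw [← Matroid.Coindep, Matroid.coindep_iff_compl_spanning (cocycle_subset_ground g),
      hM.spanning_iff sdiff_subset] at hind
    have := hker (hind e heE)
    rw [LinearMap.mem_ker, hge] at this
    exact one_ne_zero this
  obtain ⟨Q, hQD, hQ⟩ := hcodep.exists_isCircuit_subset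
  exact ⟨Q, hQD, hQ⟩

lemma IsRep.two_mul_ncard_inter_cocycle_le (hM : IsRep M φ) (hfin : M.E.Finite) (T : Set α)
    (g : Module.Dual (ZMod 2) W)
    (h : ∀ Q ⊆ cocycle M φ g, M.IsCocircuit Q → 2 * (Q ∩ T).ncard ≤ Q.ncard) :
    2 * (cocycle M φ g ∩ T).ncard ≤ (cocycle M φ g).ncard := by
  induction hD : (cocycle M φ g).ncard using Nat.strong_induction_on generalizing g with
  | _ m ih =>
  have hDfin : (cocycle M φ g).Finite := hfin.subset (cocycle_subset_ground g)
  obtain hDe | hDne := (cocycle M φ g).eq_empty_or_nonempty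
  · simp [hDe]
  obtain ⟨Q, hQD, hQ⟩ := hM.exists_isCocircuit_subset_cocycle hDne
  obtain ⟨gQ, rfl⟩ := hM.exists_cocycle_eq_of_isCocircuit hQ
  have hdiff := cocycle_add_of_subset hQD
  have hQpos : 0 < (cocycle M φ gQ).ncard := (ncard_pos (hDfin.subset hQD)).2 hQ.nonempty
  have hD' := ncard_sdiff_add_ncard_of_subset hQD hDfin
  have hDT' :=
    ncard_sdiff_add_ncard_of_subset (inter_subset_inter_left T hQD) (hDfin.inter_of_left T)
  have hrest := ih _ (by rw [hdiff]; omega) (g + gQ)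
    (fun Q' hQ' => h Q' (hQ'.trans (hdiff ▸ sdiff_subset))) rfl
  rw [hdiff, inter_sdiff_distrib_right] at hrest
  have := h _ hQD hQ
  omega

end Cocycle

lemma mrank_eq_ncard_of_isBasis {M : Matroid α} {I X : Set α} (hX : X.Finite)
    (hI : M.IsBasis I X) : mrank M X = I.ncard := by
  have hIfin : I.Finite := hX.subset hI.subset
  refine le_antisymm (csSup_le ⟨_, I, hI.indep, hI.subset, rfl⟩ ?_)
    (le_csSup ⟨X.ncard, ?_⟩ ⟨I, hI.indep, hI.subset, rfl⟩)
  · rintro _ ⟨J, hJ, hJX, rfl⟩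
    have hJI := hJ.encard_le_eRk_of_subset hJX
    rw [← hI.encard_eq_eRk, (hX.subset hJX).encard_eq_coe_toFinset_card,
      hIfin.encard_eq_coe_toFinset_card, Nat.cast_le] at hJI
    rwa [ncard_eq_toFinset_card J (hX.subset hJX), ncard_eq_toFinset_card I hIfin]
  · rintro _ ⟨J, -, hJX, rfl⟩
    exact ncard_le_ncard hJX hX

lemma NConnected.le_ncard_of_isCocircuit {M : Matroid α} {n : ℕ} {Q : Set α}
    (hconn : NConnected M n) (hfin : M.E.Finite) (hcard : 2 * n - 2 ≤ M.E.ncard)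
    (hQ : M.IsCocircuit Q) : n ≤ Q.ncard := by
  by_contra! hlt
  have hQE := hQ.subset_ground
  have hH : ¬ M.Spanning (M.E \ Q) := (Matroid.isCocircuit_iff_minimal_compl_nonspanning.1 hQ).1
  obtain ⟨I, hI⟩ := M.exists_isBasis (M.E \ Q)
  obtain ⟨J, hJ⟩ := M.exists_isBasis Q
  obtain ⟨B, hB, hIB⟩ := hI.indep.exists_isBase_superset
  have hIB' : I ⊂ B := hIB.ssubset_of_ne fun h =>
    hH ((hI.spanning_iff_spanning).1 (h ▸ hB.spanning))
  have hrH : mrank M (M.E \ Q) + 1 ≤ mrank M M.E := by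
    rw [mrank_eq_ncard_of_isBasis (hfin.subset sdiff_subset) hI,
      mrank_eq_ncard_of_isBasis hfin hB.isBasis_ground]
    exact ncard_lt_ncard hIB' (hfin.subset hB.subset_ground)
  have hrQ : mrank M Q ≤ Q.ncard := by
    rw [mrank_eq_ncard_of_isBasis (hfin.subset hQE) hJ]
    exact ncard_le_ncard hJ.subset (hfin.subset hQE)
  have hHcard := ncard_sdiff_add_ncard_of_subset hQE hfin
  have hQpos := (ncard_pos (hfin.subset hQE)).2 hQ.nonempty
  exact hconn Q.ncard Q (M.E \ Q) hQpos hlt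
    ⟨union_sdiff_cancel hQE, disjoint_sdiff_right, le_rfl, by omega, by omega⟩

lemma ncard_lt_two_mul_ncard_inter {D T A : Set α} (hT : T.Finite) (hA : A.Finite)
    (hAT : A.ncard < T.ncard) (hTD : T \ A ⊆ D) (hDTA : D ⊆ T ∪ A) :
    D.ncard < 2 * (D ∩ T).ncard := by
  have hDfin : D.Finite := (hT.union hA).subset hDTA
  have hD := ncard_inter_add_ncard_sdiff_eq_ncard D T hDfin
  have hTA := ncard_inter_add_ncard_sdiff_eq_ncard T A hT
  have hAT' := ncard_inter_add_ncard_sdiff_eq_ncard A T hA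
  have h1 : (T \ A).ncard ≤ (D ∩ T).ncard :=
    ncard_le_ncard (subset_inter hTD sdiff_subset) (hDfin.inter_of_left T)
  have h2 : (D \ T).ncard ≤ (A \ T).ncard :=
    ncard_le_ncard (fun e he => ⟨(hDTA he.1).resolve_left he.2, he.2⟩) hA.sdiff
  rw [inter_comm] at hAT'
  omega

/-- If every cocircuit Q of M intersecting T satisfies |Q| ≥ 2|Q ∩ T|, then for every
A ⊆ E(M) with |A| = n - 2 there is a circuit C of M avoiding A and meeting T in an odd
number of elements. -/
theorem circuit_cond_of_cocircuit_cond {α W : Type*}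
    [AddCommGroup W] [Module (ZMod 2) W]
    (n : ℕ) (hn : 2 ≤ n) (M : Matroid α) (φ : α → W) (hM : IsRep M φ)
    (hfin : M.E.Finite) (hcard : 2 * n - 2 ≤ M.E.ncard) (hconn : NConnected M n)
    (T : Set α) (hT : T ⊆ M.E) (hTcard : T.ncard = n - 1)
    (hQ : ∀ Q : Set α, MCocircuit M Q → (Q ∩ T).Nonempty → 2 * (Q ∩ T).ncard ≤ Q.ncard) :
    ∀ A ⊆ M.E, A.ncard = n - 2 →
      ∃ C : Set α, MCircuit M C ∧ C ⊆ M.E \ A ∧ Odd ((C ∩ T).ncard) := by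
  intro A hA hAcard
  by_contra! heven
  obtain ⟨g, hg⟩ := ZModModule.exists_dual_eq_indicator_of_even (v := φ) (S := M.E \ A) (T := T)
    fun s hsS hsum => hM.even_ncard_inter_of_sum_eq_zero sdiff_subset
      (fun C hC hCS => Nat.not_odd_iff_even.1 (heven C hC hCS)) hsS hsum
  have hTD : T \ A ⊆ cocycle M φ g := fun e ⟨heT, heA⟩ =>
    ⟨hT heT, by rw [hg e ⟨hT heT, heA⟩, indicator_of_mem heT, Pi.one_apply]⟩
  have hDTA : cocycle M φ g ⊆ T ∪ A := fun e ⟨heE, hge⟩ => by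
    by_contra he
    obtain ⟨heT, heA⟩ : e ∉ T ∧ e ∉ A := by simpa using he
    rw [hg e ⟨heE, heA⟩, indicator_of_notMem heT] at hge
    exact zero_ne_one hge
  have hcocircuits : ∀ Q ⊆ cocycle M φ g, M.IsCocircuit Q → 2 * (Q ∩ T).ncard ≤ Q.ncard := by
    refine fun Q hQD hQc => hQ Q hQc ?_
    by_contra hQT
    have hQA : Q ⊆ A := fun e he => (hDTA (hQD he)).resolve_left fun heT => hQT ⟨e, he, heT⟩
    have := ncard_le_ncard hQA (hfin.subset hA)
    have := hconn.le_ncard_of_isCocircuit hfin hcard hQc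
    omega
  have := hM.two_mul_ncard_inter_cocycle_le hfin T g hcocircuits
  have := ncard_lt_two_mul_ncard_inter (hfin.subset hT) (hfin.subset hA) (by omega) hTD hDTA
  omega
end

section
/- Let G be an n-connected graph of girth at least n, where n ≥ 2, and let T be a set of n-1 edges of G all incident to a common vertex v of degree at least 2n-2. Then the n-point splitting graph G'_T is n-connected. -/
open Set

/-! Let `S` be a set of fewer than `n` vertices of the split graph and `S₀ = some ⁻¹' S`.
A walk of `G - K` (with `S₀ ⊆ K`) lifts to the split graph minus `S` as soon as an edge at `v`
can be followed from `u = some v` either directly (an edge of `T`) or through `w = none`, i.e.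
when `w ∉ S` or `v ∈ K`. Hence the old vertices surviving in `G - K` stay connected, and only
`u` and `w` need attaching:
* if `u ∈ S`, then `v` has at least `2n - 2 - (n - 1) = n - 1` neighbours off `T`, and
  `S₀ \ {v}` has at most `n - 2` vertices, so one of them survives and is adjacent to `w`;
* if `u ∉ S` but `w ∈ S`, take `K = insert v S₀`, still of size `< n`; as `|S₀| ≤ n - 2`, one of
  the `n - 1` endpoints of `T` survives and is adjacent to `u`;
* otherwise `u` and `w` both survive, are adjacent, and `K = S₀` works with `v ∉ K`.
-/

/-- A graph is `n`-connected if it has more than `n` vertices and deleting any fewer than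
`n` vertices leaves a connected graph. -/
def GraphNConnected {V : Type*} [Fintype V] (n : ℕ) (G : SimpleGraph V) : Prop :=
  n < Fintype.card V ∧ ∀ S : Set V, S.ncard < n → (G.induce Sᶜ).Connected

/-- The point splitting of `G` at a vertex `v` with respect to a set `T` of edges incident
to `v`.  The vertex `v` is replaced by two adjacent vertices: `some v` (named `u`), which is
joined to the other endpoints of the edges of `T`, and a new vertex `none` (named `w`),
which is joined to all remaining neighbours of `v`. -/
def pointSplit {V : Type*} (G : SimpleGraph V) (v : V) (T : Set (Sym2 V)) :
    SimpleGraph (Option V) where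
  Adj x y :=
    match x, y with
    | some x, some y =>
        (x ≠ v ∧ y ≠ v ∧ G.Adj x y) ∨ (x = v ∧ y ≠ v ∧ s(v, y) ∈ T) ∨
          (y = v ∧ x ≠ v ∧ s(v, x) ∈ T)
    | some x, none => x = v ∨ (x ≠ v ∧ G.Adj v x ∧ s(v, x) ∉ T)
    | none, some y => y = v ∨ (y ≠ v ∧ G.Adj v y ∧ s(v, y) ∉ T)
    | none, none => False
  symm := by
    constructor
    rintro (x | x) (y | y) h
    · exact h
    · exact h
    · exact h
    · simp only at h ⊢
      rcases h with ⟨hx, hy, hadj⟩ | ⟨hx, hy, hmem⟩ | ⟨hy, hx, hmem⟩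
      · exact Or.inl ⟨hy, hx, hadj.symm⟩
      · exact Or.inr (Or.inr ⟨hx, hy, hmem⟩)
      · exact Or.inr (Or.inl ⟨hy, hx, hmem⟩)
  loopless := by
    constructor
    rintro (x | x) h
    · exact h
    simp only at h
    rcases h with ⟨_, _, hadj⟩ | ⟨hx, hy, _⟩ | ⟨hx, hy, _⟩
    · exact G.loopless.irrefl x hadj
    · exact hy hx
    · exact hy hx

open SimpleGraph

theorem SimpleGraph.Reachable.lift {α β : Type*} {G : SimpleGraph α} {H : SimpleGraph β}
    (f : α → β) (h : ∀ a b, G.Adj a b → H.Reachable (f a) (f b)) {a b : α}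
    (hab : G.Reachable a b) : H.Reachable (f a) (f b) := by
  rw [reachable_iff_reflTransGen] at hab ⊢
  exact Relation.ReflTransGen.lift' f
    (fun a b hab => (reachable_iff_reflTransGen _ _).mp (h a b hab)) _ _ hab

theorem Set.ncard_preimage_some_le {α : Type*} [Finite α] (S : Set (Option α)) :
    (some ⁻¹' S).ncard ≤ (S \ {none}).ncard :=
  ncard_le_ncard_of_injOn some (fun _ ha => ⟨ha, Option.some_ne_none _⟩)
    (Option.some_injective α).injOn

section PointSplit

variable {V : Type*} {G : SimpleGraph V} {v : V} {T : Set (Sym2 V)}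

theorem ncard_setOf_mk_mem_le [Finite V] : {x | s(v, x) ∈ T}.ncard ≤ T.ncard :=
  ncard_le_ncard_of_injOn (fun x => s(v, x)) (fun _ hx => hx)
    (fun _ _ _ _ h => Sym2.congr_right.mp h)

theorem ncard_setOf_mk_mem (hTv : ∀ e ∈ T, v ∈ e) : {x | s(v, x) ∈ T}.ncard = T.ncard :=
  ncard_preimage_of_injective_subset_range (fun _ _ h => Sym2.congr_right.mp h)
    (fun e he => (Sym2.mem_iff_exists.mp (hTv e he)).imp fun _ h => h.symm)

theorem pointSplit_adj_some_some {x y : V} (hx : x ≠ v) (hy : y ≠ v) (h : G.Adj x y) :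
    (pointSplit G v T).Adj (some x) (some y) :=
  Or.inl ⟨hx, hy, h⟩

theorem pointSplit_adj_some_none : (pointSplit G v T).Adj (some v) none :=
  Or.inl rfl

theorem pointSplit_adj_some_of_mem {x : V} (hx : x ≠ v) (h : s(v, x) ∈ T) :
    (pointSplit G v T).Adj (some v) (some x) :=
  Or.inr (Or.inl ⟨rfl, hx, h⟩)

theorem pointSplit_adj_none_of_notMem {x : V} (h : G.Adj v x) (hT : s(v, x) ∉ T) :
    (pointSplit G v T).Adj none (some x) :=
  Or.inr ⟨h.ne', h, hT⟩

variable {S : Set (Option V)}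

theorem pointSplit_induce_reachable_some_self {y : V} (hv : some v ∉ S) (hy : some y ∉ S)
    (h : G.Adj v y) (hT : s(v, y) ∈ T ∨ none ∉ S) :
    ((pointSplit G v T).induce Sᶜ).Reachable ⟨some v, hv⟩ ⟨some y, hy⟩ := by
  by_cases hyT : s(v, y) ∈ T
  · exact (induce_adj.mpr (pointSplit_adj_some_of_mem h.ne' hyT)).reachable
  · have hw : none ∉ S := hT.resolve_left hyT
    exact (induce_adj.mpr pointSplit_adj_some_none).reachable.trans (v := ⟨none, hw⟩)
      (induce_adj.mpr (pointSplit_adj_none_of_notMem h hyT)).reachable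

theorem pointSplit_induce_reachable_of_adj {x y : V} (hx : some x ∉ S) (hy : some y ∉ S)
    (hv : none ∉ S ∨ (x ≠ v ∧ y ≠ v)) (h : G.Adj x y) :
    ((pointSplit G v T).induce Sᶜ).Reachable ⟨some x, hx⟩ ⟨some y, hy⟩ := by
  by_cases hxv : x = v
  · subst hxv
    exact pointSplit_induce_reachable_some_self hx hy h (.inr (hv.resolve_right (·.1 rfl)))
  by_cases hyv : y = v
  · subst hyv
    exact (pointSplit_induce_reachable_some_self hy hx h.symm
      (.inr (hv.resolve_right (·.2 rfl)))).symm
  exact (induce_adj.mpr (pointSplit_adj_some_some hxv hyv h)).reachable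

theorem pointSplit_induce_reachable_some {K : Set V} (hKS : ∀ x ∉ K, some x ∉ S)
    (hv : none ∉ S ∨ v ∈ K) {x y : V} (hx : x ∉ K) (hy : y ∉ K)
    (hG : (G.induce Kᶜ).Reachable ⟨x, hx⟩ ⟨y, hy⟩) :
    ((pointSplit G v T).induce Sᶜ).Reachable ⟨some x, hKS x hx⟩ ⟨some y, hKS y hy⟩ :=
  hG.lift (fun a : ↥Kᶜ => (⟨some a, hKS a a.2⟩ : ↥Sᶜ)) fun a b hab =>
    pointSplit_induce_reachable_of_adj _ _
      (hv.imp_right fun hvK => ⟨fun h => a.2 (h ▸ hvK), fun h => b.2 (h ▸ hvK)⟩) hab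

theorem exists_mk_mem_notMem [Finite V] {K : Set V} (hTv : ∀ e ∈ T, v ∈ e)
    (hK : K.ncard < T.ncard) : ∃ t, s(v, t) ∈ T ∧ t ∉ K :=
  exists_mem_notMem_of_ncard_lt_ncard (hK.trans_eq (ncard_setOf_mk_mem hTv).symm)

theorem exists_adj_mk_notMem_notMem [Fintype V] [DecidableRel G.Adj] {n : ℕ} {K : Set V}
    (hdeg : 2 * n - 2 ≤ G.degree v) (hT : T.ncard ≤ n - 1) (hvK : v ∈ K) (hK : K.ncard < n) :
    ∃ t, G.Adj v t ∧ s(v, t) ∉ T ∧ t ∉ K := by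
  have hN : n - 1 ≤ (G.neighborSet v \ {x | s(v, x) ∈ T}).ncard :=
    calc n - 1 ≤ G.degree v - T.ncard := by omega
      _ ≤ (G.neighborSet v).ncard - {x | s(v, x) ∈ T}.ncard := by
        rw [← card_neighborSet_eq_degree, ← Nat.card_eq_fintype_card, Nat.card_coe_set_eq]
        exact Nat.sub_le_sub_left ncard_setOf_mk_mem_le _
      _ ≤ _ := le_ncard_sdiff _ _
  have hKv : (K \ {v}).ncard < n - 1 := by
    have := ncard_sdiff_singleton_add_one hvK
    omega
  obtain ⟨t, ⟨ht, htT⟩, htK⟩ := exists_mem_notMem_of_ncard_lt_ncard (hKv.trans_le hN)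
  exact ⟨t, ht, htT, fun h => htK ⟨h, ht.ne'⟩⟩

theorem pointSplit_induce_preconnected_of_some_mem (hu : some v ∈ S)
    (hG : (G.induce (some ⁻¹' S)ᶜ).Preconnected) {t : V} (ht : G.Adj v t) (htT : s(v, t) ∉ T)
    (htS : some t ∉ S) : ((pointSplit G v T).induce Sᶜ).Preconnected := by
  have hanchor : ∀ a : ↥Sᶜ, ((pointSplit G v T).induce Sᶜ).Reachable a ⟨some t, htS⟩ := by
    rintro ⟨_ | a, ha⟩
    · exact (induce_adj.mpr (pointSplit_adj_none_of_notMem ht htT)).reachable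
    · exact pointSplit_induce_reachable_some (K := some ⁻¹' S) (fun _ h => h) (.inr hu) ha htS
        (hG _ _)
  exact fun a b => (hanchor a).trans (hanchor b).symm

theorem pointSplit_induce_preconnected_of_none_mem (hw : none ∈ S) (hu : some v ∉ S)
    (hG : (G.induce (insert v (some ⁻¹' S))ᶜ).Preconnected) {t : V} (htv : t ≠ v)
    (htT : s(v, t) ∈ T) (htS : some t ∉ S) : ((pointSplit G v T).induce Sᶜ).Preconnected := by
  have hKS : ∀ x ∉ insert v (some ⁻¹' S), some x ∉ S :=
    fun _ hx hxS => hx (mem_insert_of_mem v hxS)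
  have hanchor : ∀ a : ↥Sᶜ, ((pointSplit G v T).induce Sᶜ).Reachable a ⟨some v, hu⟩ := by
    rintro ⟨_ | a, ha⟩
    · exact absurd hw ha
    by_cases hav : a = v
    · subst hav
      rfl
    exact (pointSplit_induce_reachable_some hKS (.inr (mem_insert v _)) (x := a) (y := t)
      (fun h => h.elim hav ha) (fun h => h.elim htv htS) (hG _ _)).trans
      (induce_adj.mpr (pointSplit_adj_some_of_mem htv htT)).reachable.symm
  exact fun a b => (hanchor a).trans (hanchor b).symm

theorem pointSplit_induce_preconnected_of_notMem (hw : none ∉ S) (hu : some v ∉ S)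
    (hG : (G.induce (some ⁻¹' S)ᶜ).Preconnected) :
    ((pointSplit G v T).induce Sᶜ).Preconnected := by
  have hanchor : ∀ a : ↥Sᶜ, ((pointSplit G v T).induce Sᶜ).Reachable a ⟨some v, hu⟩ := by
    rintro ⟨_ | a, ha⟩
    · exact (induce_adj.mpr pointSplit_adj_some_none).reachable.symm
    · exact pointSplit_induce_reachable_some (K := some ⁻¹' S) (fun _ h => h) (.inl hw) ha hu
        (hG _ _)
  exact fun a b => (hanchor a).trans (hanchor b).symm

end PointSplit

theorem pointSplit_nConnected_general {V : Type*} [Fintype V] (n : ℕ)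
    (G : SimpleGraph V) [DecidableRel G.Adj]
    (hconn : GraphNConnected n G)
    (v : V) (hdeg : 2 * n - 2 ≤ G.degree v)
    (T : Set (Sym2 V)) (hTE : T ⊆ G.edgeSet) (hTv : ∀ e ∈ T, v ∈ e)
    (hTcard : T.ncard = n - 1) :
    GraphNConnected n (pointSplit G v T) := by
  obtain ⟨hcard, hdel⟩ := hconn
  refine ⟨by rw [Fintype.card_option]; omega, fun S hS => ?_⟩
  have hSne : S ≠ univ := by
    rintro rfl
    rw [ncard_univ, Nat.card_eq_fintype_card, Fintype.card_option] at hS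
    omega
  refine (connected_iff _).mpr ⟨?_, (nonempty_compl.mpr hSne).to_subtype⟩
  have hS₀ := (ncard_preimage_some_le S).trans (ncard_sdiff_singleton_le S none)
  by_cases hu : some v ∈ S
  · obtain ⟨t, ht, htT, htS⟩ :=
      exists_adj_mk_notMem_notMem (K := some ⁻¹' S) hdeg hTcard.le hu (by omega)
    exact pointSplit_induce_preconnected_of_some_mem hu
      (hdel (some ⁻¹' S) (by omega)).preconnected ht htT htS
  by_cases hw : none ∈ S
  · have hS₀' := (ncard_preimage_some_le S).trans_lt (ncard_sdiff_singleton_lt_of_mem hw)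
    obtain ⟨t, htT, htS⟩ := exists_mk_mem_notMem (K := some ⁻¹' S) hTv (by omega)
    have hK := hdel _ ((ncard_insert_le v (some ⁻¹' S)).trans_lt (by omega))
    exact pointSplit_induce_preconnected_of_none_mem hw hu hK.preconnected
      (G.mem_edgeSet.mp (hTE htT)).ne' htT htS
  exact pointSplit_induce_preconnected_of_notMem hw hu
    (hdel (some ⁻¹' S) (by omega)).preconnected

/-- Slater's theorem, under a girth hypothesis: if G is n-connected with girth at least n and
T is a set of n - 1 edges incident to a common vertex v of degree at least 2n - 2, then the
n-point splitting graph G'_T is n-connected. -/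
theorem pointSplit_nConnected {V : Type*} [Fintype V] (n : ℕ) (hn : 2 ≤ n)
    (G : SimpleGraph V) [DecidableRel G.Adj]
    (hconn : GraphNConnected n G) (hgirth : (n : ℕ∞) ≤ G.egirth)
    (v : V) (hdeg : 2 * n - 2 ≤ G.degree v)
    (T : Set (Sym2 V)) (hTE : T ⊆ G.edgeSet) (hTv : ∀ e ∈ T, v ∈ e)
    (hTcard : T.ncard = n - 1) :
    GraphNConnected n (pointSplit G v T) :=
  pointSplit_nConnected_general n G hconn v hdeg T hTE hTv hTcard
end
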